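/- arXiv:0802.1038 — 2 statements merged into one kernel-verified Lean document; each statement's English description precedes it below -/
import Mathlib

section
/- In a Q-linear symmetric monoidal category, if an object P satisfies Λ²(P) ≅ I and S²(P) ≅ 0, then the functor X ↦ P ⊗ X is an equivalence of categories with P ⊗ (P ⊗ X) ≅ X naturally in X. -/
open CategoryTheory CategoryTheory.Limits MonoidalCategory

/-- In a ℚ-linear symmetric monoidal category, if an object `P` satisfies
`Λ²(P) ≅ I` and `S²(P) ≅ 0` (symmetric and exterior squares taken as coequalizers of the
identity with `±` the braiding), then `X ↦ P ⊗ X` is an equivalence of categories, with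
`P ⊗ (P ⊗ X) ≅ X` naturally in `X`. -/
theorem stmt0 {C : Type*} [Category C] [Preadditive C] [CategoryTheory.Linear ℚ C]
    [MonoidalCategory C] [SymmetricCategory C] [MonoidalPreadditive C]
    (P : C)
    [HasCoequalizer (𝟙 (P ⊗ P)) ((β_ P P).hom)]
    [HasCoequalizer (𝟙 (P ⊗ P)) (-(β_ P P).hom)]
    (hΛ : coequalizer (𝟙 (P ⊗ P)) (-(β_ P P).hom) ≅ 𝟙_ C)
    (hS : IsZero (coequalizer (𝟙 (P ⊗ P)) ((β_ P P).hom))) :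
    (tensorLeft P).IsEquivalence ∧ Nonempty ((tensorLeft P ⋙ tensorLeft P) ≅ 𝟭 C) := by
  -- Step 1: the braiding on `P ⊗ P` is `-𝟙`.
  have hββ : (β_ P P).hom ≫ (β_ P P).hom = 𝟙 (P ⊗ P) := SymmetricCategory.symmetry P P
  have he : (𝟙 (P ⊗ P) : _) ≫ ((1/2 : ℚ) • (𝟙 (P ⊗ P) + (β_ P P).hom))
      = (β_ P P).hom ≫ ((1/2 : ℚ) • (𝟙 (P ⊗ P) + (β_ P P).hom)) := by
    simp [Preadditive.comp_add, hββ, add_comm]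
  have hfac := coequalizer.condition (𝟙 (P ⊗ P)) ((β_ P P).hom)
  have hzero : ((1/2 : ℚ) • (𝟙 (P ⊗ P) + (β_ P P).hom)) = 0 := by
    have := coequalizer.π_desc (f := 𝟙 (P ⊗ P)) (g := (β_ P P).hom)
      ((1/2 : ℚ) • (𝟙 (P ⊗ P) + (β_ P P).hom)) he
    rw [← this, hS.eq_zero_of_tgt (coequalizer.π _ _), zero_comp]
  have hβ : (β_ P P).hom = -𝟙 (P ⊗ P) := by
    have h2 : 𝟙 (P ⊗ P) + (β_ P P).hom = 0 := by
      have := congrArg (fun f => (2 : ℚ) • f) hzero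
      simpa [smul_smul] using this
    linear_combination (norm := abel) h2
  -- Step 2: `P ⊗ P ≅ 𝟙_ C`.
  have hdes : 𝟙 (P ⊗ P) ≫ 𝟙 (P ⊗ P) = (-(β_ P P).hom) ≫ 𝟙 (P ⊗ P) := by
    simp [hβ]
  let d : coequalizer (𝟙 (P ⊗ P)) (-(β_ P P).hom) ⟶ P ⊗ P :=
    coequalizer.desc (𝟙 (P ⊗ P)) hdes
  have hπd : coequalizer.π _ _ ≫ d = 𝟙 (P ⊗ P) := coequalizer.π_desc _ _
  have hdπ : d ≫ coequalizer.π (𝟙 (P ⊗ P)) (-(β_ P P).hom) = 𝟙 _ := by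
    apply coequalizer.hom_ext
    rw [← Category.assoc, hπd, Category.id_comp, Category.comp_id]
  let e : P ⊗ P ≅ 𝟙_ C :=
    { hom := coequalizer.π (𝟙 (P ⊗ P)) (-(β_ P P).hom), inv := d
      hom_inv_id := hπd, inv_hom_id := hdπ } ≪≫ hΛ
  -- Step 3: natural isomorphism `tensorLeft P ⋙ tensorLeft P ≅ 𝟭 C`.
  let N : (tensorLeft P ⋙ tensorLeft P) ≅ 𝟭 C :=
    (tensorLeftTensor P P).symm ≪≫ (curriedTensor C).mapIso e ≪≫ leftUnitorNatIso C
  have hEq : (tensorLeft P).IsEquivalence :=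
    (CategoryTheory.Equivalence.mk (tensorLeft P) (tensorLeft P) N.symm N).isEquivalence_functor
  exact ⟨hEq, ⟨N⟩⟩
end

section
/- Let g be a finite-dimensional Lie algebra over a field k of characteristic 0. A connection on a g-equivariant dg algebra X (an associative dg superalgebra with compatible actions of g and of the contractions ι_x for x ∈ g) is a linear map θ : g* → X^{odd} satisfying ι_x θ(ξ) = ξ(x)·1 for all x ∈ g, ξ ∈ g*, and which is g-equivariant. If θ and θ′ are two connections on X, then the induced Chern-Weil algebra morphisms c_θ, c_{θ′} from the Weil algebra W(g) = S(g*) ⊗ Λ(g*) to X are homotopic via a g-equivariant homotopy. -/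
/-- A `g`-differential (super)algebra: an associative algebra `A` with a parity involution
`par`, an odd differential `d`, a `g`-action `rho` by even derivations, and odd contractions
`iot`, satisfying `d² = 0`, `ι_x² = 0`, the Cartan relation `d ι_x + ι_x d = ρ_x`, the Lie
algebra relations, and the (super) derivation properties. -/
structure GDSA (k g A : Type) [Field k] [LieRing g] [LieAlgebra k g]
    [Ring A] [Algebra k A] where
  par : A ≃ₐ[k] A
  par_par : ∀ a, par (par a) = a
  d : A →ₗ[k] A
  rho : g →ₗ[k] Module.End k A
  iot : g →ₗ[k] Module.End k A
  d_par : ∀ a, par (d a) = - d (par a)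
  iot_par : ∀ x a, par (iot x a) = - iot x (par a)
  rho_par : ∀ x a, par (rho x a) = rho x (par a)
  d_sq : ∀ a, d (d a) = 0
  iot_sq : ∀ x a, iot x (iot x a) = 0
  cartan : ∀ x a, d (iot x a) + iot x (d a) = rho x a
  rho_lie : ∀ x y a, rho ⁅x, y⁆ a = rho x (rho y a) - rho y (rho x a)
  iot_rho : ∀ x y a, rho x (iot y a) - iot y (rho x a) = iot ⁅x, y⁆ a
  d_mul : ∀ a b, d (a * b) = d a * b + par a * d b
  iot_mul : ∀ x a b, iot x (a * b) = iot x a * b + par a * iot x b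
  rho_mul : ∀ x a b, rho x (a * b) = rho x a * b + a * rho x b

variable {k g : Type} [Field k] [CharZero k] [LieRing g] [LieAlgebra k g]

/-- The coadjoint action of `g` on `g* = Dual k g`. -/
def coad (x : g) (ξ : Module.Dual k g) : Module.Dual k g :=
  -(ξ ∘ₗ (LieAlgebra.ad k g x))

/-- A connection on a `g`-differential algebra: an odd, `g`-equivariant map
`θ : g* → A` with `ι_x θ(ξ) = ξ(x) • 1`. -/
def GDSA.IsConnection {A : Type} [Ring A] [Algebra k A] (S : GDSA k g A)
    (θ : Module.Dual k g →ₗ[k] A) : Prop :=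
  (∀ ξ, S.par (θ ξ) = - θ ξ) ∧
  (∀ (x : g) (ξ), S.iot x (θ ξ) = ξ x • (1 : A)) ∧
  (∀ (x : g) (ξ), S.rho x (θ ξ) = θ (coad x ξ))

/-- A morphism of `g`-differential algebras. -/
def GDSA.IsHom {A B : Type} [Ring A] [Algebra k A] [Ring B] [Algebra k B]
    (SA : GDSA k g A) (SB : GDSA k g B) (f : A →ₐ[k] B) : Prop :=
  (∀ a, f (SA.par a) = SB.par (f a)) ∧ (∀ a, f (SA.d a) = SB.d (f a)) ∧
  (∀ (x : g) (a), f (SA.iot x a) = SB.iot x (f a)) ∧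
  (∀ (x : g) (a), f (SA.rho x a) = SB.rho x (f a))

/-- The Weil algebra of `g` (as the representing object for the functor of connections):
a `g`-differential algebra `W` with a universal connection `θW`, such that every connection
`θ` on a `g`-differential algebra `X` is induced by a unique morphism `W → X` of
`g`-differential algebras (the Chern-Weil morphism `c_θ`). -/
def IsWeil {W : Type} [Ring W] [Algebra k W] (SW : GDSA k g W)
    (θW : Module.Dual k g →ₗ[k] W) : Prop :=
  SW.IsConnection θW ∧
  ∀ (X : Type) [Ring X] [Algebra k X], ∀ (SX : GDSA k g X)
    (θ : Module.Dual k g →ₗ[k] X), SX.IsConnection θ →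
      ∃! c : W →ₐ[k] X, GDSA.IsHom SW SX c ∧ ∀ ξ, c (θW ξ) = θ ξ

set_option linter.unusedSectionVars false

/-- Triple algebra used to build homotopies: elements `(a, m, b)` thought of as
upper triangular matrices `[[a, m], [0, b]]` with a Koszul-sign-twisted multiplication. -/
@[ext] structure Tri {X : Type} [Ring X] [Algebra k X] (S : GDSA k g X) where
  a : X
  m : X
  b : X

namespace Tri

variable {X : Type} [Ring X] [Algebra k X] {S : GDSA k g X}

instance : Add (Tri S) := ⟨fun t u => ⟨t.a + u.a, t.m + u.m, t.b + u.b⟩⟩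
instance : Zero (Tri S) := ⟨⟨0, 0, 0⟩⟩
instance : Neg (Tri S) := ⟨fun t => ⟨-t.a, -t.m, -t.b⟩⟩
instance : Sub (Tri S) := ⟨fun t u => ⟨t.a - u.a, t.m - u.m, t.b - u.b⟩⟩
instance : SMul ℕ (Tri S) := ⟨fun n t => ⟨n • t.a, n • t.m, n • t.b⟩⟩
instance : SMul ℤ (Tri S) := ⟨fun n t => ⟨n • t.a, n • t.m, n • t.b⟩⟩
instance : SMul k (Tri S) := ⟨fun r t => ⟨r • t.a, r • t.m, r • t.b⟩⟩
instance : Mul (Tri S) := ⟨fun t u => ⟨t.a * u.a, S.par t.a * u.m + t.m * u.b, t.b * u.b⟩⟩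
instance : One (Tri S) := ⟨⟨1, 0, 1⟩⟩

@[simp] lemma add_a (t u : Tri S) : (t + u).a = t.a + u.a := rfl
@[simp] lemma add_m (t u : Tri S) : (t + u).m = t.m + u.m := rfl
@[simp] lemma add_b (t u : Tri S) : (t + u).b = t.b + u.b := rfl
@[simp] lemma zero_a : (0 : Tri S).a = 0 := rfl
@[simp] lemma zero_m : (0 : Tri S).m = 0 := rfl
@[simp] lemma zero_b : (0 : Tri S).b = 0 := rfl
@[simp] lemma neg_a (t : Tri S) : (-t).a = -t.a := rfl
@[simp] lemma neg_m (t : Tri S) : (-t).m = -t.m := rfl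
@[simp] lemma neg_b (t : Tri S) : (-t).b = -t.b := rfl
@[simp] lemma sub_a (t u : Tri S) : (t - u).a = t.a - u.a := rfl
@[simp] lemma sub_m (t u : Tri S) : (t - u).m = t.m - u.m := rfl
@[simp] lemma sub_b (t u : Tri S) : (t - u).b = t.b - u.b := rfl
@[simp] lemma smul_a (r : k) (t : Tri S) : (r • t).a = r • t.a := rfl
@[simp] lemma smul_m (r : k) (t : Tri S) : (r • t).m = r • t.m := rfl
@[simp] lemma smul_b (r : k) (t : Tri S) : (r • t).b = r • t.b := rfl
@[simp] lemma mul_a (t u : Tri S) : (t * u).a = t.a * u.a := rfl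
@[simp] lemma mul_m (t u : Tri S) : (t * u).m = S.par t.a * u.m + t.m * u.b := rfl
@[simp] lemma mul_b (t u : Tri S) : (t * u).b = t.b * u.b := rfl
@[simp] lemma one_a : (1 : Tri S).a = 1 := rfl
@[simp] lemma one_m : (1 : Tri S).m = 0 := rfl
@[simp] lemma one_b : (1 : Tri S).b = 1 := rfl

def toProd (t : Tri S) : X × X × X := (t.a, t.m, t.b)

lemma toProd_inj : Function.Injective (toProd (S := S)) := by
  rintro ⟨a, m, b⟩ ⟨a', m', b'⟩ h
  simpa [toProd, Tri.mk.injEq, Prod.ext_iff] using h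

instance : AddCommGroup (Tri S) :=
  toProd_inj.addCommGroup toProd rfl (fun _ _ => rfl) (fun _ => rfl) (fun _ _ => rfl)
    (fun _ _ => rfl) (fun _ _ => rfl)

def toProdHom : Tri S →+ X × X × X :=
  { toFun := toProd, map_zero' := rfl, map_add' := fun _ _ => rfl }

instance : Module k (Tri S) :=
  toProd_inj.module k toProdHom (fun _ _ => rfl)

instance : Ring (Tri S) :=
  { (inferInstance : AddCommGroup (Tri S)) with
    mul := (· * ·)
    one := 1
    left_distrib := by
      intro t u v; ext <;> simp [mul_add, map_add, add_mul] <;> abel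
    right_distrib := by
      intro t u v; ext <;> simp [mul_add, map_add, add_mul] <;> abel
    zero_mul := by intro t; ext <;> simp
    mul_zero := by intro t; ext <;> simp
    mul_assoc := by
      intro t u v; ext <;> simp [mul_assoc, map_mul, mul_add, add_mul] <;> abel
    one_mul := by intro t; ext <;> simp
    mul_one := by intro t; ext <;> simp }

instance : Algebra k (Tri S) :=
  Algebra.ofModule
    (by intro r t u; ext <;> simp [smul_mul_assoc, map_smul, smul_add])
    (by intro r t u; ext <;> simp [mul_smul_comm, smul_add])

@[simp] lemma algebraMap_a (r : k) : (algebraMap k (Tri S) r).a = algebraMap k X r := by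
  rw [Algebra.algebraMap_eq_smul_one, Algebra.algebraMap_eq_smul_one]; simp

@[simp] lemma algebraMap_m (r : k) : (algebraMap k (Tri S) r).m = 0 := by
  rw [Algebra.algebraMap_eq_smul_one]; simp

@[simp] lemma algebraMap_b (r : k) : (algebraMap k (Tri S) r).b = algebraMap k X r := by
  rw [Algebra.algebraMap_eq_smul_one, Algebra.algebraMap_eq_smul_one]; simp

end Tri

namespace Tri

variable {X : Type} [Ring X] [Algebra k X] {S : GDSA k g X}

/-- Parity on `Tri S`. -/
def parL : Tri S →ₗ[k] Tri S where
  toFun t := ⟨S.par t.a, -S.par t.m, S.par t.b⟩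
  map_add' t u := by ext <;> simp [map_add] <;> abel
  map_smul' r t := by ext <;> simp [map_smul]

@[simp] lemma parL_a (t : Tri S) : (parL t).a = S.par t.a := rfl
@[simp] lemma parL_m (t : Tri S) : (parL t).m = -S.par t.m := rfl
@[simp] lemma parL_b (t : Tri S) : (parL t).b = S.par t.b := rfl

lemma parL_invol : Function.Involutive (parL (S := S)) := by
  intro t; ext <;> simp [S.par_par]

def parLE : Tri S ≃ₗ[k] Tri S :=
  { toLinearMap := parL, invFun := parL,
    left_inv := parL_invol, right_inv := parL_invol }

@[simp] lemma parLE_apply (t : Tri S) : parLE t = parL t := rfl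

/-- Parity on `Tri S` as an algebra equivalence. -/
def parE : Tri S ≃ₐ[k] Tri S :=
  AlgEquiv.ofLinearEquiv parLE
    (by ext <;> simp)
    (by intro t u; ext <;> simp [map_mul, map_add, S.par_par, mul_neg, neg_mul] <;> abel)

@[simp] lemma parE_a (t : Tri S) : (parE t).a = S.par t.a := rfl
@[simp] lemma parE_m (t : Tri S) : (parE t).m = -S.par t.m := rfl
@[simp] lemma parE_b (t : Tri S) : (parE t).b = S.par t.b := rfl

/-- Differential on `Tri S`. -/
def dL : Tri S →ₗ[k] Tri S where
  toFun t := ⟨S.d t.a, -S.d t.m + t.a - t.b, S.d t.b⟩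
  map_add' t u := by ext <;> simp [map_add] <;> abel
  map_smul' r t := by ext <;> simp [map_smul, smul_sub, smul_add, smul_neg] <;> abel

@[simp] lemma dL_a (t : Tri S) : (dL t).a = S.d t.a := rfl
@[simp] lemma dL_m (t : Tri S) : (dL t).m = -S.d t.m + t.a - t.b := rfl
@[simp] lemma dL_b (t : Tri S) : (dL t).b = S.d t.b := rfl

/-- `g`-action on `Tri S`. -/
def rhoL : g →ₗ[k] Module.End k (Tri S) where
  toFun x :=
    { toFun := fun t => ⟨S.rho x t.a, S.rho x t.m, S.rho x t.b⟩
      map_add' := fun t u => by ext <;> simp [map_add]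
      map_smul' := fun r t => by ext <;> simp [map_smul] }
  map_add' x y := by
    ext t <;> simp [LinearMap.add_apply, map_add]
  map_smul' r x := by
    ext t <;> simp [LinearMap.smul_apply, map_smul]

@[simp] lemma rhoL_a (x : g) (t : Tri S) : (rhoL x t).a = S.rho x t.a := rfl
@[simp] lemma rhoL_m (x : g) (t : Tri S) : (rhoL x t).m = S.rho x t.m := rfl
@[simp] lemma rhoL_b (x : g) (t : Tri S) : (rhoL x t).b = S.rho x t.b := rfl

/-- Contractions on `Tri S`. -/
def iotL : g →ₗ[k] Module.End k (Tri S) where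
  toFun x :=
    { toFun := fun t => ⟨S.iot x t.a, -S.iot x t.m, S.iot x t.b⟩
      map_add' := fun t u => by ext <;> simp [map_add] <;> abel
      map_smul' := fun r t => by ext <;> simp [map_smul] }
  map_add' x y := by
    ext t <;> simp [LinearMap.add_apply, map_add] <;> abel
  map_smul' r x := by
    ext t <;> simp [LinearMap.smul_apply, map_smul]

@[simp] lemma iotL_a (x : g) (t : Tri S) : (iotL x t).a = S.iot x t.a := rfl
@[simp] lemma iotL_m (x : g) (t : Tri S) : (iotL x t).m = -S.iot x t.m := rfl
@[simp] lemma iotL_b (x : g) (t : Tri S) : (iotL x t).b = S.iot x t.b := rfl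

/-- The `g`-differential algebra structure on `Tri S`. -/
def gdsa (S : GDSA k g X) : GDSA k g (Tri S) where
  par := parE
  par_par t := parL_invol t
  d := dL
  rho := rhoL
  iot := iotL
  d_par t := by
    ext <;> simp [map_add, map_sub, map_neg, S.d_par] <;> abel
  iot_par x t := by
    ext <;> simp [map_add, map_sub, map_neg, S.iot_par] <;> abel
  rho_par x t := by
    ext <;> simp [S.rho_par]
  d_sq t := by
    ext <;> simp [map_add, map_sub, map_neg, S.d_sq] <;> abel
  iot_sq x t := by
    ext <;> simp [S.iot_sq]
  cartan x t := by
    ext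
    case a => simpa using S.cartan x t.a
    case b => simpa using S.cartan x t.b
    case m =>
      show (-S.d (-S.iot x t.m) + S.iot x t.a - S.iot x t.b) +
        (-S.iot x (-S.d t.m + t.a - t.b)) = S.rho x t.m
      rw [← S.cartan x t.m]
      simp only [map_add, map_sub, map_neg, neg_neg]
      abel
  rho_lie x y t := by
    ext <;> simp [S.rho_lie]
  iot_rho x y t := by
    ext
    case a => simpa using S.iot_rho x y t.a
    case b => simpa using S.iot_rho x y t.b
    case m =>
      show S.rho x (-S.iot y t.m) - (-S.iot y (S.rho x t.m)) = -S.iot ⁅x, y⁆ t.m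
      rw [← S.iot_rho x y t.m]
      simp [map_neg]
      abel
  d_mul t u := by
    ext <;>
      simp [S.d_mul, S.d_par, S.par_par, map_mul, map_add, map_sub, map_neg,
        mul_add, add_mul, sub_mul, mul_sub, neg_mul, mul_neg] <;> abel
  iot_mul x t u := by
    ext <;>
      simp [S.iot_mul, S.iot_par, S.par_par, map_mul, map_add, map_sub, map_neg,
        mul_add, add_mul, sub_mul, mul_sub, neg_mul, mul_neg] <;> abel
  rho_mul x t u := by
    ext <;> simp [S.rho_mul, S.rho_par, mul_add, add_mul, map_add] <;> abel

end Tri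

namespace Tri

variable {X : Type} [Ring X] [Algebra k X] {S : GDSA k g X}

/-- First corner projection as an algebra homomorphism. -/
def pa : Tri S →ₐ[k] X where
  toFun := Tri.a
  map_one' := rfl
  map_mul' _ _ := rfl
  map_zero' := rfl
  map_add' _ _ := rfl
  commutes' r := by simp

/-- Second corner projection as an algebra homomorphism. -/
def pb : Tri S →ₐ[k] X where
  toFun := Tri.b
  map_one' := rfl
  map_mul' _ _ := rfl
  map_zero' := rfl
  map_add' _ _ := rfl
  commutes' r := by simp

/-- Middle projection as a linear map. -/
def pm : Tri S →ₗ[k] X where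
  toFun := Tri.m
  map_add' _ _ := rfl
  map_smul' _ _ := rfl

@[simp] lemma pa_apply (t : Tri S) : pa t = t.a := rfl
@[simp] lemma pb_apply (t : Tri S) : pb t = t.b := rfl
@[simp] lemma pm_apply (t : Tri S) : pm t = t.m := rfl

/-- The connection on `Tri S` combining two connections on `X`. -/
def conn (θ θ' : Module.Dual k g →ₗ[k] X) : Module.Dual k g →ₗ[k] Tri S where
  toFun ξ := ⟨θ ξ, 0, θ' ξ⟩
  map_add' ξ η := by ext <;> simp
  map_smul' r ξ := by ext <;> simp

lemma conn_isConnection {θ θ' : Module.Dual k g →ₗ[k] X}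
    (hθ : S.IsConnection θ) (hθ' : S.IsConnection θ') :
    (gdsa S).IsConnection (conn θ θ') := by
  refine ⟨fun ξ => ?_, fun x ξ => ?_, fun x ξ => ?_⟩
  · ext <;> simp [gdsa, conn, hθ.1, hθ'.1]
  · ext <;> simp [gdsa, conn, hθ.2.1, hθ'.2.1]
  · ext <;> simp [gdsa, conn, hθ.2.2, hθ'.2.2]

lemma pa_isHom {W : Type} [Ring W] [Algebra k W] (SW : GDSA k g W) (C : W →ₐ[k] Tri S)
    (hC : GDSA.IsHom SW (gdsa S) C) : GDSA.IsHom SW S (pa.comp C) := by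
  obtain ⟨h1, h2, h3, h4⟩ := hC
  exact ⟨fun w => by simp [h1 w, gdsa], fun w => by simp [h2 w, gdsa],
    fun x w => by simp [h3 x w, gdsa], fun x w => by simp [h4 x w, gdsa]⟩

lemma pb_isHom {W : Type} [Ring W] [Algebra k W] (SW : GDSA k g W) (C : W →ₐ[k] Tri S)
    (hC : GDSA.IsHom SW (gdsa S) C) : GDSA.IsHom SW S (pb.comp C) := by
  obtain ⟨h1, h2, h3, h4⟩ := hC
  exact ⟨fun w => by simp [h1 w, gdsa], fun w => by simp [h2 w, gdsa],
    fun x w => by simp [h3 x w, gdsa], fun x w => by simp [h4 x w, gdsa]⟩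

end Tri


/-- Let `g` be a finite-dimensional Lie algebra over a field `k` of
characteristic `0`.  If `θ` and `θ'` are two connections on a `g`-differential algebra `X`,
then the induced Chern-Weil morphisms `c_θ, c_θ' : W(g) → X` from the Weil algebra are
homotopic via a `g`-equivariant (odd) homotopy. -/
theorem stmt11 [Module.Finite k g]
    {W X : Type} [Ring W] [Algebra k W] [Ring X] [Algebra k X]
    (SW : GDSA k g W) (θW : Module.Dual k g →ₗ[k] W) (hW : IsWeil SW θW)
    (SX : GDSA k g X) (θ θ' : Module.Dual k g →ₗ[k] X)
    (hθ : SX.IsConnection θ) (hθ' : SX.IsConnection θ')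
    (c c' : W →ₐ[k] X)
    (hc : GDSA.IsHom SW SX c ∧ ∀ ξ, c (θW ξ) = θ ξ)
    (hc' : GDSA.IsHom SW SX c' ∧ ∀ ξ, c' (θW ξ) = θ' ξ) :
    ∃ h : W →ₗ[k] X,
      -- h is odd
      (∀ w, h (SW.par w) = - SX.par (h w)) ∧
      -- h is g-equivariant
      (∀ (x : g) (w), h (SW.rho x w) = SX.rho x (h w)) ∧
      -- d h + h d = c_θ - c_θ'
      (∀ w, SX.d (h w) + h (SW.d w) = c w - c' w) := by
  obtain ⟨C, ⟨hCH, hCθ⟩, -⟩ :=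
    hW.2 (Tri SX) (Tri.gdsa SX) (Tri.conn θ θ') (Tri.conn_isConnection hθ hθ')
  -- identify the corner components of C with c and c'
  obtain ⟨c₀, -, hu⟩ := hW.2 X SX θ hθ
  have hca : Tri.pa.comp C = c := by
    rw [hu (Tri.pa.comp C) ⟨Tri.pa_isHom SW C hCH, fun ξ => by simp [hCθ ξ, Tri.conn]⟩,
      hu c hc]
  obtain ⟨c₁, -, hu'⟩ := hW.2 X SX θ' hθ'
  have hcb : Tri.pb.comp C = c' := by
    rw [hu' (Tri.pb.comp C) ⟨Tri.pb_isHom SW C hCH, fun ξ => by simp [hCθ ξ, Tri.conn]⟩,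
      hu' c' hc']
  have hca' : ∀ w, (C w).a = c w := fun w => congrArg (fun f => f w) hca
  have hcb' : ∀ w, (C w).b = c' w := fun w => congrArg (fun f => f w) hcb
  refine ⟨Tri.pm.comp C.toLinearMap, fun w => ?_, fun x w => ?_, fun w => ?_⟩
  · have := congrArg Tri.m (hCH.1 w)
    simpa [Tri.gdsa] using this
  · have := congrArg Tri.m (hCH.2.2.2 x w)
    simpa [Tri.gdsa] using this
  · have := congrArg Tri.m (hCH.2.1 w)
    simp only [Tri.gdsa, Tri.dL_m] at this
    simp only [Tri.pm_apply, LinearMap.comp_apply, AlgHom.toLinearMap_apply, this,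
      hca' w, hcb' w]
    abel
end
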